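/- arXiv:1608.04973 — 2 statements merged into one kernel-verified Lean document; each statement's English description precedes it below -/
import Mathlib

section
/- Let G=(V,E) be a finite simple graph with |E| ≥ 1 and let K be a field. Then the cut ideal I_G contains a nonzero homogeneous element of degree 1 (i.e. the degree-1 component (I_G)_1 is nonzero) if and only if G is disconnected. -/
open scoped Classical

noncomputable section

namespace CutPaper

open MvPolynomial

/-- An edge `e` is cut by the partition `A | Aᶜ` if it has exactly one endpoint in `A`. -/
def IsCutEdge {V : Type} (A : Set V) (e : Sym2 V) : Prop :=
  ∃ u v : V, e = s(u, v) ∧ u ∈ A ∧ v ∉ A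

/-- The cut set of `A`: all edges of `G` with exactly one endpoint in `A`. -/
def cutSet {V : Type} (G : SimpleGraph V) (A : Set V) : Set (Sym2 V) :=
  {e ∈ G.edgeSet | IsCutEdge A e}

lemma isCutEdge_compl {V : Type} (A : Set V) (e : Sym2 V) :
    IsCutEdge Aᶜ e ↔ IsCutEdge A e := by
  constructor <;> rintro ⟨u, v, rfl, hu, hv⟩
  · exact ⟨v, u, Sym2.eq_swap, Set.notMem_compl_iff.mp hv, hu⟩
  · exact ⟨v, u, Sym2.eq_swap, hv, not_not_intro hu⟩

/-- Two subsets determine the same unordered partition `A | Aᶜ` of `V`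
iff they are equal or complementary. -/
def partitionSetoid (V : Type) : Setoid (Set V) where
  r A B := B = A ∨ B = Aᶜ
  iseqv := by
    refine ⟨fun A => Or.inl rfl, @fun A B h => ?_, @fun A B C h1 h2 => ?_⟩
    · rcases h with rfl | rfl
      · exact Or.inl rfl
      · exact Or.inr (compl_compl A).symm
    · rcases h1 with rfl | rfl <;> rcases h2 with rfl | rfl
      · exact Or.inl rfl
      · exact Or.inr rfl
      · exact Or.inr rfl
      · exact Or.inl (compl_compl A)

/-- The unordered partitions `A | Aᶜ` of `V`, indexing the variables of `S_G`. -/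
abbrev Partition (V : Type) := Quotient (partitionSetoid V)

variable (K : Type) [CommRing K]

/-- The variable `q_{A|Aᶜ}` of the polynomial ring `S_G`. -/
def qPart {V : Type} (A : Set V) : MvPolynomial (Partition V) K :=
  X (Quotient.mk (partitionSetoid V) A)

/-- The monomial `u_A = ∏_{e ∈ Cut(A)} s_e · ∏_{e ∈ E \ Cut(A)} t_e`;
the variable `s_e` is `X (true, e)` and `t_e` is `X (false, e)`. -/
def cutMonomial {V : Type} [Finite V] (G : SimpleGraph V) (A : Set V) :
    MvPolynomial (Bool × Sym2 V) K :=
  ∏ e ∈ (Set.toFinite G.edgeSet).toFinset,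
    if IsCutEdge A e then X (true, e) else X (false, e)

lemma cutMonomial_compl {V : Type} [Finite V] (G : SimpleGraph V) (A : Set V) :
    cutMonomial K G Aᶜ = cutMonomial K G A := by
  unfold cutMonomial
  refine Finset.prod_congr rfl fun e _ => ?_
  by_cases h : IsCutEdge A e
  · rw [if_pos ((isCutEdge_compl A e).mpr h), if_pos h]
  · rw [if_neg fun hc => h ((isCutEdge_compl A e).mp hc), if_neg h]

/-- The `K`-algebra homomorphism `φ_G : S_G → R_G`, `q_{A|Aᶜ} ↦ u_A`. -/
def phi {V : Type} [Finite V] (G : SimpleGraph V) :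
    MvPolynomial (Partition V) K →ₐ[K] MvPolynomial (Bool × Sym2 V) K :=
  aeval fun p : Partition V =>
    Quotient.lift (cutMonomial K G)
      (fun A B hAB => by
        have h : B = A ∨ B = Aᶜ := hAB
        rcases h with rfl | rfl
        · rfl
        · exact (cutMonomial_compl K G A).symm) p

/-- The cut ideal `I_G = ker φ_G`. -/
def cutIdeal {V : Type} [Finite V] (G : SimpleGraph V) :
    Ideal (MvPolynomial (Partition V) K) :=
  RingHom.ker (phi K G)

/-- The cut algebra `K[G]`, i.e. the image of `φ_G`: the `K`-subalgebra of `R_G`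
generated by the monomials `u_A`. -/
def cutAlgebra {V : Type} [Finite V] (G : SimpleGraph V) :
    Subalgebra K (MvPolynomial (Bool × Sym2 V) K) :=
  Algebra.adjoin K {m | ∃ A : Set V, m = cutMonomial K G A}

/-- The generator `u_A` of the cut algebra, as an element of the cut algebra. -/
def uGen {V : Type} [Finite V] (G : SimpleGraph V) (A : Set V) : ↥(cutAlgebra K G) :=
  ⟨cutMonomial K G A, Algebra.subset_adjoin ⟨A, rfl⟩⟩

/-- An element of `S_G/I` is homogeneous of degree `d` if it is the class of a homogeneous
polynomial of degree `d`. -/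
def QuotHomogeneous {σ : Type} (I : Ideal (MvPolynomial σ K)) (d : ℕ)
    (x : MvPolynomial σ K ⧸ I) : Prop :=
  ∃ f : MvPolynomial σ K, f.IsHomogeneous d ∧ Ideal.Quotient.mk I f = x

/-- The cut algebra of `H` is an algebra retract of the cut algebra of `G`:
there are homogeneous `K`-algebra homomorphisms `ι : K[H] → K[G]` (injective) and
`π : K[G] → K[H]` with `π ∘ ι = id`. -/
def CutAlgebraRetract {V W : Type} [Finite V] [Finite W]
    (H : SimpleGraph W) (G : SimpleGraph V) : Prop :=
  ∃ (ι : (MvPolynomial (Partition W) K ⧸ cutIdeal K H) →ₐ[K]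
      (MvPolynomial (Partition V) K ⧸ cutIdeal K G))
    (π : (MvPolynomial (Partition V) K ⧸ cutIdeal K G) →ₐ[K]
      (MvPolynomial (Partition W) K ⧸ cutIdeal K H)),
    Function.Injective ι ∧
    (∀ d x, QuotHomogeneous K (cutIdeal K H) d x →
      ∃ d', QuotHomogeneous K (cutIdeal K G) d' (ι x)) ∧
    (∀ d x, QuotHomogeneous K (cutIdeal K G) d x →
      ∃ d', QuotHomogeneous K (cutIdeal K H) d' (π x)) ∧
    π.comp ι = AlgHom.id K _

/-- The graph obtained from `G` by contracting the edge `{u, v}`: the vertex `u` is removed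
and merged into `v`. -/
def contractEdge {V : Type} (G : SimpleGraph V) (u v : V) :
    SimpleGraph {x : V // x ≠ u} where
  Adj a b := a ≠ b ∧
    (G.Adj a b ∨ ((a : V) = v ∧ G.Adj u b) ∨ ((b : V) = v ∧ G.Adj a u))
  symm := ⟨by
    rintro a b ⟨hne, h | ⟨ha, h⟩ | ⟨hb, h⟩⟩
    · exact ⟨hne.symm, Or.inl h.symm⟩
    · exact ⟨hne.symm, Or.inr (Or.inr ⟨ha, h.symm⟩)⟩
    · exact ⟨hne.symm, Or.inr (Or.inl ⟨hb, h.symm⟩)⟩⟩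
  loopless := ⟨fun a h => h.1 rfl⟩

/-- The induced subgraph `G_W` is a neighborhood-minor of `G`: `W` and `W' = Wᶜ` are nonempty
and there is a vertex `v ∈ W` with `W ∩ N_G(W') ⊆ N_{G_W}[v]`. -/
def IsNeighborhoodMinor {V : Type} (G : SimpleGraph V) (W : Set V) : Prop :=
  W.Nonempty ∧ Wᶜ.Nonempty ∧
    ∃ v ∈ W, ∀ x ∈ W, (∃ y ∈ Wᶜ, G.Adj y x) → x = v ∨ G.Adj v x

/-- The cut vector `δ_A ∈ {0,1}^E` of the partition `A | Aᶜ`. -/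
def cutVector {V : Type} (G : SimpleGraph V) (A : Set V) : ↥G.edgeSet → ℝ :=
  fun e => if IsCutEdge A (e : Sym2 V) then 1 else 0

/-- The cut polytope `Cut^□(G) ⊆ ℝ^E`: the convex hull of the cut vectors. -/
def cutPolytope {V : Type} (G : SimpleGraph V) : Set (↥G.edgeSet → ℝ) :=
  convexHull ℝ {x | ∃ A : Set V, x = cutVector G A}

/-- `F` is a face of `P`: either a trivial face (`P` or `∅`), or the intersection of `P`
with a supporting hyperplane. -/
def IsFace {α : Type} (P F : Set (α → ℝ)) : Prop :=
  F = P ∨ F = ∅ ∨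
    ∃ (φ : (α → ℝ) →ₗ[ℝ] ℝ) (c : ℝ), φ ≠ 0 ∧
      (∀ x ∈ P, φ x ≤ c) ∧ F = P ∩ {x | φ x = c}

/-- `P` and `Q` are affinely isomorphic: there is a bijective map from `P` onto `Q`
extending to an affine map. -/
def AffinelyIsomorphic {α β : Type} (P : Set (α → ℝ)) (Q : Set (β → ℝ)) : Prop :=
  ∃ f : (α → ℝ) →ᵃ[ℝ] (β → ℝ), Set.InjOn f P ∧ f '' P = Q

/-- The monomial `z · ∏_{e ∈ Cut(A)} y_e` of the polytopal algebra of the cut polytope;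
the variable `z` is `X none` and `y_e` is `X (some e)`. -/
def polytopeMonomial {V : Type} [Finite V] (G : SimpleGraph V) (A : Set V) :
    MvPolynomial (Option (Sym2 V)) K :=
  X none * ∏ e ∈ (Set.toFinite (cutSet G A)).toFinset, X (some e)

/-- The polytopal algebra `K[Cut^□(G)]`: the subalgebra of `K[y_e (e ∈ E), z]` generated by
the monomials `z · y^{δ_A}` attached to the lattice points (= cut vectors) of `Cut^□(G)`. -/
def polytopalAlgebra {V : Type} [Finite V] (G : SimpleGraph V) :
    Subalgebra K (MvPolynomial (Option (Sym2 V)) K) :=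
  Algebra.adjoin K {m | ∃ A : Set V, m = polytopeMonomial K G A}

/-- `G'` is a combinatorial retract of `G`: it is obtained from `G` by a finite sequence of
edge contractions and neighborhood-minors. -/
inductive CombinatorialRetract : ∀ {V W : Type}, SimpleGraph V → SimpleGraph W → Prop
  | refl {V : Type} (G : SimpleGraph V) : CombinatorialRetract G G
  | contract {V W : Type} (G : SimpleGraph V) (u v : V) (huv : G.Adj u v)
      (G' : SimpleGraph W) (h : CombinatorialRetract (contractEdge G u v) G') :
      CombinatorialRetract G G'
  | nbhdMinor {V W : Type} (G : SimpleGraph V) (S : Set V)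
      (hS : IsNeighborhoodMinor G S) (G' : SimpleGraph W)
      (h : CombinatorialRetract (SimpleGraph.induce S G) G') :
      CombinatorialRetract G G'

/-! A linear form `∑ c_A q_A` lies in `I_G` iff `∑ c_A u_A = 0`. If `G` is connected, `Cut(A)`
determines the partition `A | Aᶜ`: the symmetric difference of two sets with the same cut set has
empty cut set, so it is `∅` or `V`. Hence the monomials `u_A` are pairwise distinct and thus
linearly independent. If `G` is disconnected, a connected component `A` has
`Cut(A) = ∅ = Cut(∅)`, so `q_A - q_∅` is a nonzero linear form in `I_G`. -/

lemma _root_.MvPolynomial.IsHomogeneous.eq_zero_of_map_eq_zero {σ R A : Type*} [CommRing R]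
    [Ring A] [Algebra R A] (φ : MvPolynomial σ R →ₐ[R] A)
    (hφ : LinearIndependent R fun i => φ (X i)) {f : MvPolynomial σ R}
    (hf : f.IsHomogeneous 1) (h : φ f = 0) : f = 0 := by
  rw [← mem_homogeneousSubmodule, homogeneousSubmodule_one_eq_span_X,
    Finsupp.mem_span_range_iff_exists_finsupp] at hf
  obtain ⟨c, rfl⟩ := hf
  have hc : c = 0 := by
    refine linearIndependent_iff.mp hφ c ?_
    rw [Finsupp.linearCombination_apply, ← h, map_finsuppSum]
    simp only [map_smul]
  simp [hc]

section Graph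

open scoped symmDiff

variable {V : Type} {G : SimpleGraph V} {A B : Set V}

lemma isCutEdge_mk (A : Set V) (u v : V) : IsCutEdge A s(u, v) ↔ Xor (u ∈ A) (v ∈ A) := by
  constructor
  · rintro ⟨x, y, hxy, hx, hy⟩
    rcases Sym2.eq_iff.mp hxy with ⟨rfl, rfl⟩ | ⟨rfl, rfl⟩
    · exact Or.inl ⟨hx, hy⟩
    · exact Or.inr ⟨hx, hy⟩
  · rintro (⟨hu, hv⟩ | ⟨hv, hu⟩)
    · exact ⟨u, v, rfl, hu, hv⟩
    · exact ⟨v, u, Sym2.eq_swap, hv, hu⟩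

lemma cutSet_eq_empty_iff : cutSet G A = ∅ ↔ ∀ ⦃x y⦄, G.Adj x y → x ∈ A → y ∈ A := by
  simp only [Set.eq_empty_iff_forall_notMem, cutSet, Set.mem_ofPred_eq, not_and]
  constructor
  · intro h x y hxy hx
    by_contra hy
    exact h s(x, y) hxy ((isCutEdge_mk A x y).mpr (Or.inl ⟨hx, hy⟩))
  · intro h e he
    induction e using Sym2.ind with
    | h x y =>
      rw [isCutEdge_mk]
      rintro (⟨hx, hy⟩ | ⟨hy, hx⟩)
      · exact hy (h he hx)
      · exact hx (h he.symm hy)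

lemma cutSet_symmDiff : cutSet G (A ∆ B) = cutSet G A ∆ cutSet G B := by
  ext e
  induction e using Sym2.ind with
  | h x y =>
    simp only [cutSet, Set.mem_symmDiff, Set.mem_ofPred_eq, isCutEdge_mk, Xor]
    tauto

lemma mem_of_reachable_of_cutSet_eq_empty (hA : cutSet G A = ∅) {x y : V}
    (hxy : G.Reachable x y) (hx : x ∈ A) : y ∈ A := by
  rw [SimpleGraph.reachable_iff_reflTransGen] at hxy
  induction hxy with
  | refl => exact hx
  | tail _ hadj ih => exact cutSet_eq_empty_iff.mp hA hadj ih

lemma eq_empty_or_eq_univ_of_cutSet_eq_empty (hG : G.Connected)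
    (hA : cutSet G A = ∅) : A = ∅ ∨ A = Set.univ := by
  rw [or_iff_not_imp_left, ← ne_eq, ← Set.nonempty_iff_ne_empty]
  rintro ⟨x, hx⟩
  exact Set.eq_univ_of_forall fun y => mem_of_reachable_of_cutSet_eq_empty hA (hG x y) hx

lemma eq_or_eq_compl_of_cutSet_eq (hG : G.Connected)
    (h : cutSet G A = cutSet G B) : B = A ∨ B = Aᶜ := by
  have hAB : cutSet G (A ∆ B) = ∅ := by rw [cutSet_symmDiff, h, symmDiff_self, Set.bot_eq_empty]
  rcases eq_empty_or_eq_univ_of_cutSet_eq_empty hG hAB with hAB | hAB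
  · exact Or.inl (symmDiff_eq_bot.mp hAB).symm
  · exact Or.inr ((symmDiff_eq_top A B).mp hAB).compl_eq.symm

lemma exists_cutSet_eq_empty_of_not_preconnected (hG : ¬ G.Preconnected) :
    ∃ A : Set V, A.Nonempty ∧ Aᶜ.Nonempty ∧ cutSet G A = ∅ := by
  simp only [SimpleGraph.Preconnected, not_forall] at hG
  obtain ⟨u, v, huv⟩ := hG
  refine ⟨{x | G.Reachable u x}, ⟨u, SimpleGraph.Reachable.refl u⟩, ⟨v, huv⟩, ?_⟩
  exact cutSet_eq_empty_iff.mpr fun x y hxy hx => hx.trans hxy.reachable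

end Graph

section CutMonomial

variable {V : Type} [Finite V] (G : SimpleGraph V)

def cutExponent (A : Set V) : Bool × Sym2 V →₀ ℕ :=
  ∑ e ∈ (Set.toFinite G.edgeSet).toFinset, Finsupp.single (decide (IsCutEdge A e), e) 1

lemma cutMonomial_eq_monomial (A : Set V) :
    cutMonomial K G A = monomial (cutExponent G A) 1 := by
  rw [cutExponent, monomial_sum_one]
  refine Finset.prod_congr rfl fun e _ => ?_
  by_cases h : IsCutEdge A e <;> simp [h, X]

lemma cutExponent_apply_true {e : Sym2 V} (he : e ∈ G.edgeSet) (A : Set V) :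
    cutExponent G A (true, e) = if IsCutEdge A e then 1 else 0 := by
  rw [cutExponent, Finsupp.finsetSum_apply,
    Finset.sum_eq_single_of_mem e ((Set.Finite.mem_toFinset _).mpr he)]
  · by_cases h : IsCutEdge A e <;> simp [h]
  · intro e' _ hne
    simp [hne]

lemma cutExponent_eq_iff {A B : Set V} :
    cutExponent G A = cutExponent G B ↔ cutSet G A = cutSet G B := by
  constructor
  · intro h
    ext e
    simp only [cutSet, Set.mem_ofPred_eq, and_congr_right_iff]
    intro he
    have := DFunLike.congr_fun h (true, e)
    rw [cutExponent_apply_true G he, cutExponent_apply_true G he] at this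
    split_ifs at this <;> simp_all
  · intro h
    refine Finset.sum_congr rfl fun e he => ?_
    have he' : e ∈ G.edgeSet := (Set.Finite.mem_toFinset _).mp he
    have := Set.ext_iff.mp h e
    simp only [cutSet, Set.mem_ofPred_eq, he', true_and] at this
    rw [decide_eq_decide.mpr this]

lemma phi_X_mk (A : Set V) :
    phi K G (X (Quotient.mk (partitionSetoid V) A)) = monomial (cutExponent G A) 1 := by
  rw [phi, aeval_X, Quotient.lift_mk, cutMonomial_eq_monomial]

lemma linearIndependent_phi_X (hG : G.Connected) :
    LinearIndependent K fun p => phi K G (X p) := by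
  have hφ : (fun p => phi K G (X p)) = basisMonomials _ K ∘ fun p => cutExponent G p.out := by
    funext p
    conv_lhs => rw [← Quotient.out_eq p]
    rw [Function.comp_apply, coe_basisMonomials, phi_X_mk]
  rw [hφ]
  refine (basisMonomials _ K).linearIndependent.comp _ fun p q hpq => ?_
  rw [← Quotient.out_equiv_out]
  exact eq_or_eq_compl_of_cutSet_eq hG ((cutExponent_eq_iff G).mp hpq)

end CutMonomial

theorem stmt1_general {V : Type} [Fintype V] [Nonempty V] (K : Type) [Field K]
    (G : SimpleGraph V) :
    (∃ f ∈ cutIdeal K G, f ≠ 0 ∧ f.IsHomogeneous 1) ↔ ¬ G.Connected := by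
  constructor
  · rintro ⟨f, hfI, hf0, hf⟩ hG
    exact hf0 (hf.eq_zero_of_map_eq_zero (phi K G) (linearIndependent_phi_X K G hG) hfI)
  · intro hG
    obtain ⟨A, ⟨u, hu⟩, ⟨v, hv⟩, hA⟩ :=
      exists_cutSet_eq_empty_of_not_preconnected fun h => hG ⟨h⟩
    have hcut : cutSet G A = cutSet G ∅ := by
      rw [hA, eq_comm, cutSet_eq_empty_iff]
      exact fun _ _ _ => id
    refine ⟨X (Quotient.mk _ A) - X (Quotient.mk _ ∅), ?_, ?_,
      (isHomogeneous_X K _).sub (isHomogeneous_X K _)⟩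
    · rw [cutIdeal, RingHom.mem_ker, map_sub, phi_X_mk, phi_X_mk,
        (cutExponent_eq_iff G).mpr hcut, sub_self]
    · rw [sub_ne_zero, Ne, X_injective.eq_iff, Quotient.eq]
      rintro (h | h)
      · exact h.symm.subset hu
      · exact h.superset hv

theorem stmt1 {V : Type} [Fintype V] [Nonempty V] (K : Type) [Field K]
    (G : SimpleGraph V) (hE : G.edgeSet.Nonempty) :
    (∃ f ∈ cutIdeal K G, f ≠ 0 ∧ f.IsHomogeneous 1) ↔ ¬ G.Connected :=
  stmt1_general K G

end CutPaper
end
end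

section
/- Let G be a Ferrers graph and K a field. Then for every nonempty subset W of the vertex set of G, the cut algebra K[G_W] of the induced subgraph G_W is an algebra retract of the cut algebra K[G]. -/
open scoped Classical

noncomputable section

namespace CutPaper

open MvPolynomial

variable (K : Type) [CommRing K]

/-!
A graph homomorphism `f : G → G'` pulls partitions back, `A | Aᶜ ↦ f⁻¹A | f⁻¹Aᶜ`, and the cut
monomial of `f⁻¹A` is obtained from that of `A` by substituting `s_{e'} ↦ ∏_{f(e) = e'} s_e` and
`t_{e'} ↦ ∏_{f(e) = e'} t_e`. Hence `f` induces a degree-preserving map `K[G'] → K[G]`, and if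
`i : H → G` and `r : G → H` are homomorphisms with `r ∘ i` fixing every non-isolated vertex of
`H`, the maps induced by `r` and `i` exhibit `K[H]` as a retract of `K[G]`.

For a Ferrers graph `G` and an induced subgraph `G_W` with an edge, such an `r` is the folding
that keeps the non-isolated vertices of `G_W` and sends every other vertex to the least vertex
of `W` on its side: since adjacency passes to smaller vertices, it maps edges to edges. If `G_W`
has no edges, every cut monomial of `G_W` is `1`, so `K[G_W] = K` and `ι` is evaluation at `1`.
-/

lemma isCutEdge_mk_iff {V : Type} (A : Set V) (a b : V) :
    IsCutEdge A s(a, b) ↔ (a ∈ A ∧ b ∉ A ∨ b ∈ A ∧ a ∉ A) := by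
  constructor
  · rintro ⟨u, v, huv, hu, hv⟩
    rcases Sym2.eq_iff.mp huv with ⟨rfl, rfl⟩ | ⟨rfl, rfl⟩
    exacts [Or.inl ⟨hu, hv⟩, Or.inr ⟨hu, hv⟩]
  · rintro (⟨ha, hb⟩ | ⟨hb, ha⟩)
    exacts [⟨a, b, rfl, ha, hb⟩, ⟨b, a, Sym2.eq_swap, hb, ha⟩]

lemma isCutEdge_preimage_iff {V V' : Type} (r : V → V') (A : Set V') (e : Sym2 V) :
    IsCutEdge (r ⁻¹' A) e ↔ IsCutEdge A (e.map r) := by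
  induction e using Sym2.ind with
  | _ a b => simp only [Sym2.map_mk, isCutEdge_mk_iff, Set.mem_preimage]

def partitionComap {V V' : Type} (r : V → V') : Partition V' → Partition V :=
  Quotient.map (r ⁻¹' ·) fun A B (hAB : B = A ∨ B = Aᶜ) => by
    rcases hAB with rfl | rfl
    exacts [Or.inl rfl, Or.inr Set.preimage_compl]

lemma rename_partitionComap_qPart {V V' : Type} (r : V → V') (A : Set V') :
    rename (partitionComap r) (qPart K A) = qPart K (r ⁻¹' A) :=
  rename_X _ _

lemma phi_qPart {V : Type} [Finite V] (G : SimpleGraph V) (A : Set V) :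
    phi K G (qPart K A) = cutMonomial K G A :=
  aeval_X _ _

lemma algHom_ext_qPart {V B : Type} [CommSemiring B] [Algebra K B]
    {f g : MvPolynomial (Partition V) K →ₐ[K] B} (h : ∀ A : Set V, f (qPart K A) = g (qPart K A)) :
    f = g :=
  algHom_ext fun p => Quotient.inductionOn p h

lemma cutMonomial_congr {V : Type} [Finite V] (G : SimpleGraph V) {A B : Set V}
    (h : ∀ e ∈ G.edgeSet, IsCutEdge A e ↔ IsCutEdge B e) :
    cutMonomial K G A = cutMonomial K G B :=
  Finset.prod_congr rfl fun e he => if_congr (h e ((Set.Finite.mem_toFinset _).mp he)) rfl rfl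

lemma mk_qPart_eq_mk_qPart_iff {V : Type} [Finite V] (G : SimpleGraph V) (A B : Set V) :
    Ideal.Quotient.mk (cutIdeal K G) (qPart K A) = Ideal.Quotient.mk (cutIdeal K G) (qPart K B) ↔
      cutMonomial K G A = cutMonomial K G B := by
  rw [Ideal.Quotient.eq, cutIdeal, RingHom.mem_ker, map_sub, phi_qPart, phi_qPart, sub_eq_zero]

def edgePullback {V V' : Type} [Finite V] (G : SimpleGraph V) (r : V → V') :
    MvPolynomial (Bool × Sym2 V') K →ₐ[K] MvPolynomial (Bool × Sym2 V) K :=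
  aeval fun p => ∏ e ∈ (Set.toFinite G.edgeSet).toFinset with e.map r = p.2, X (p.1, e)

lemma edgePullback_cutMonomial {V V' : Type} [Finite V] [Finite V'] {G : SimpleGraph V}
    {G' : SimpleGraph V'} (f : G →g G') (A : Set V') :
    edgePullback K G f (cutMonomial K G' A) = cutMonomial K G (f ⁻¹' A) := by
  have hmaps : ∀ e ∈ (Set.toFinite G.edgeSet).toFinset,
      e.map f ∈ (Set.toFinite G'.edgeSet).toFinset := fun e he => by
    simpa using f.map_mem_edgeSet (by simpa using he)
  rw [cutMonomial, cutMonomial, map_prod, ← Finset.prod_fiberwise_of_maps_to hmaps]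
  refine Finset.prod_congr rfl fun e' _ => ?_
  split_ifs with hcut <;> rw [edgePullback, aeval_X] <;>
    refine Finset.prod_congr rfl fun e he => ?_ <;>
    obtain rfl : e.map f = e' := (Finset.mem_filter.mp he).2 <;>
    rw [← isCutEdge_preimage_iff] at hcut
  exacts [(if_pos hcut).symm, (if_neg hcut).symm]

section CutQuotientMap

variable {V V' V'' : Type} [Finite V] [Finite V'] [Finite V''] {G : SimpleGraph V}
  {G' : SimpleGraph V'} {G'' : SimpleGraph V''}

lemma phi_comp_rename_partitionComap (f : G →g G') :
    (phi K G).comp (rename (partitionComap f)) = (edgePullback K G f).comp (phi K G') :=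
  algHom_ext_qPart K fun A => by
    simp only [AlgHom.comp_apply, rename_partitionComap_qPart, phi_qPart,
      edgePullback_cutMonomial]

lemma cutIdeal_le_comap_rename_partitionComap (f : G →g G') :
    cutIdeal K G' ≤ (cutIdeal K G).comap (rename (partitionComap f)) := fun x hx => by
  rw [cutIdeal, RingHom.mem_ker] at hx
  rw [Ideal.mem_comap, cutIdeal, RingHom.mem_ker, ← AlgHom.comp_apply,
    phi_comp_rename_partitionComap, AlgHom.comp_apply, hx, map_zero]

def cutQuotientMap (f : G →g G') :
    (MvPolynomial (Partition V') K ⧸ cutIdeal K G') →ₐ[K]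
      (MvPolynomial (Partition V) K ⧸ cutIdeal K G) :=
  Ideal.quotientMapₐ _ (rename (partitionComap f)) (cutIdeal_le_comap_rename_partitionComap K f)

lemma cutQuotientMap_mk_qPart (f : G →g G') (A : Set V') :
    cutQuotientMap K f (Ideal.Quotient.mk _ (qPart K A)) =
      Ideal.Quotient.mk _ (qPart K (f ⁻¹' A)) := by
  rw [cutQuotientMap, Ideal.quotient_map_mkₐ, Ideal.Quotient.mkₐ_eq_mk,
    rename_partitionComap_qPart]

lemma quotHomogeneous_cutQuotientMap (f : G →g G') {d : ℕ} {x}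
    (hx : QuotHomogeneous K (cutIdeal K G') d x) :
    QuotHomogeneous K (cutIdeal K G) d (cutQuotientMap K f x) := by
  obtain ⟨p, hp, rfl⟩ := hx
  exact ⟨_, hp.rename_isHomogeneous, rfl⟩

lemma cutQuotientMap_comp (f : G →g G') (g : G' →g G'') :
    cutQuotientMap K (g.comp f) = (cutQuotientMap K f).comp (cutQuotientMap K g) :=
  Ideal.Quotient.algHom_ext _ (algHom_ext_qPart K fun A => by
    simp only [AlgHom.comp_apply, Ideal.Quotient.mkₐ_eq_mk, cutQuotientMap_mk_qPart]
    rfl)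

lemma cutQuotientMap_eq_id (g : G →g G) (hg : ∀ v w, G.Adj v w → g v = v) :
    cutQuotientMap K g = AlgHom.id K _ := by
  refine Ideal.Quotient.algHom_ext _ (algHom_ext_qPart K fun A => ?_)
  simp only [AlgHom.comp_apply, Ideal.Quotient.mkₐ_eq_mk, cutQuotientMap_mk_qPart,
    AlgHom.id_apply]
  refine (mk_qPart_eq_mk_qPart_iff K G _ A).mpr (cutMonomial_congr K G fun e he => ?_)
  induction e using Sym2.ind with
  | _ v w => rw [isCutEdge_preimage_iff, Sym2.map_mk, hg v w he, hg w v he.symm]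

end CutQuotientMap

theorem cutAlgebraRetract_of_retraction {V W : Type} [Finite V] [Finite W] {H : SimpleGraph W}
    {G : SimpleGraph V} (i : H →g G) (r : G →g H) (hri : ∀ a b, H.Adj a b → r (i a) = a) :
    CutAlgebraRetract K H G := by
  have hπι : (cutQuotientMap K i).comp (cutQuotientMap K r) = AlgHom.id K _ := by
    rw [← cutQuotientMap_comp]
    exact cutQuotientMap_eq_id K _ hri
  refine ⟨cutQuotientMap K r, cutQuotientMap K i, ?_, fun d x hx => ⟨d, ?_⟩,
    fun d x hx => ⟨d, ?_⟩, hπι⟩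
  · exact Function.LeftInverse.injective (AlgHom.congr_fun hπι)
  · exact quotHomogeneous_cutQuotientMap K r hx
  · exact quotHomogeneous_cutQuotientMap K i hx

lemma cutMonomial_bot {V : Type} [Finite V] (A : Set V) :
    cutMonomial K (⊥ : SimpleGraph V) A = 1 := by
  simp only [cutMonomial, SimpleGraph.edgeSet_bot, Set.Finite.toFinset_empty, Finset.prod_empty]

lemma mk_qPart_bot {V : Type} [Finite V] (A : Set V) :
    Ideal.Quotient.mk (cutIdeal K (⊥ : SimpleGraph V)) (qPart K A) = 1 := by
  rw [← map_one (Ideal.Quotient.mk _), Ideal.Quotient.eq, cutIdeal, RingHom.mem_ker, map_sub,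
    map_one, phi_qPart, cutMonomial_bot, sub_self]

lemma phi_bot {V : Type} [Finite V] :
    phi K (⊥ : SimpleGraph V) = (Algebra.ofId K _).comp (aeval fun _ => 1) :=
  algHom_ext_qPart K fun A => by
    rw [phi_qPart, cutMonomial_bot, AlgHom.comp_apply, qPart, aeval_X, map_one]

theorem cutAlgebraRetract_of_eq_bot {V W : Type} [Finite V] [Finite W] {H : SimpleGraph W}
    {G : SimpleGraph V} (i : H →g G) (hH : H = ⊥) :
    CutAlgebraRetract K H G := by
  subst hH
  have hker : ∀ f ∈ cutIdeal K (⊥ : SimpleGraph W), aeval (fun _ => (1 : K)) f = 0 := by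
    intro f hf
    rw [cutIdeal, RingHom.mem_ker, phi_bot, AlgHom.comp_apply, Algebra.ofId_apply,
      algebraMap_eq] at hf
    exact (map_eq_zero_iff _ (C_injective _ K)).mp hf
  let ι := Ideal.Quotient.liftₐ _
    ((Algebra.ofId K (MvPolynomial (Partition V) K ⧸ cutIdeal K G)).comp (aeval fun _ => 1))
    fun f hf => by rw [AlgHom.comp_apply, hker f hf, map_zero]
  have hπι : (cutQuotientMap K i).comp ι = AlgHom.id K _ := by
    refine Ideal.Quotient.algHom_ext _ (algHom_ext_qPart K fun A => ?_)
    simp only [AlgHom.comp_apply, Ideal.Quotient.mkₐ_eq_mk, mk_qPart_bot, map_one]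
  refine ⟨ι, cutQuotientMap K i, Function.LeftInverse.injective (AlgHom.congr_fun hπι),
    fun d x hx => ⟨0, ?_⟩, fun d x hx => ⟨d, quotHomogeneous_cutQuotientMap K i hx⟩, hπι⟩
  obtain ⟨f, -, rfl⟩ := hx
  exact ⟨C (aeval (fun _ => 1) f), isHomogeneous_C _ _, rfl⟩

section Ferrers

variable {α β : Type} (G : SimpleGraph (α ⊕ β)) (W : Set (α ⊕ β))

def ferrersFold (x₀ y₀ : W) (v : α ⊕ β) : W :=
  if h : v ∈ W ∧ ∃ w ∈ W, G.Adj v w then ⟨v, h.1⟩ else Sum.elim (fun _ => x₀) (fun _ => y₀) v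

lemma ferrersFold_of_adj (x₀ y₀ : W) {a b : W} (hab : G.Adj a b) : ferrersFold G W x₀ y₀ a = a :=
  dif_pos ⟨a.2, b, b.2, hab⟩

variable {G W}

lemma ferrersFold_adj [LinearOrder α] [LinearOrder β]
    (hX : ∀ i j : α, ¬ G.Adj (Sum.inl i) (Sum.inl j))
    (hY : ∀ i j : β, ¬ G.Adj (Sum.inr i) (Sum.inr j))
    (hferrers : ∀ (i p : α) (j q : β),
      G.Adj (Sum.inl i) (Sum.inr j) → p ≤ i → q ≤ j → G.Adj (Sum.inl p) (Sum.inr q))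
    {i₀ : α} {j₀ : β} (hi₀ : Sum.inl i₀ ∈ W) (hj₀ : Sum.inr j₀ ∈ W)
    (hi₀_le : ∀ i, Sum.inl i ∈ W → i₀ ≤ i) (hj₀_le : ∀ j, Sum.inr j ∈ W → j₀ ≤ j)
    (h₀ : G.Adj (Sum.inl i₀) (Sum.inr j₀)) ⦃i : α⦄ ⦃j : β⦄ (hij : G.Adj (Sum.inl i) (Sum.inr j)) :
    G.Adj (ferrersFold G W ⟨_, hi₀⟩ ⟨_, hj₀⟩ (Sum.inl i))
      (ferrersFold G W ⟨_, hi₀⟩ ⟨_, hj₀⟩ (Sum.inr j)) := by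
  have hleft : (∃ w ∈ W, G.Adj (Sum.inl i) w) → G.Adj (Sum.inl i) (Sum.inr j₀) := by
    rintro ⟨(i' | q), hqW, hq⟩
    · exact absurd hq (hX i i')
    · exact hferrers i i q j₀ hq le_rfl (hj₀_le q hqW)
  have hright : (∃ w ∈ W, G.Adj (Sum.inr j) w) → G.Adj (Sum.inl i₀) (Sum.inr j) := by
    rintro ⟨(p | j'), hpW, hp⟩
    · exact hferrers p i₀ j j hp.symm (hi₀_le p hpW) le_rfl
    · exact absurd hp (hY j j')
  unfold ferrersFold
  split_ifs with hi hj hj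
  exacts [hij, hleft hi.2, hright hj.2, h₀]

theorem exists_retraction_induce_of_ferrers [LinearOrder α] [LinearOrder β] [Finite α] [Finite β]
    (hX : ∀ i j : α, ¬ G.Adj (Sum.inl i) (Sum.inl j))
    (hY : ∀ i j : β, ¬ G.Adj (Sum.inr i) (Sum.inr j))
    (hferrers : ∀ (i p : α) (j q : β),
      G.Adj (Sum.inl i) (Sum.inr j) → p ≤ i → q ≤ j → G.Adj (Sum.inl p) (Sum.inr q))
    (hW : G.induce W ≠ ⊥) :
    ∃ r : G →g G.induce W, ∀ a b : W, G.Adj a b → r a = a := by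
  obtain ⟨i, j, hiW, hjW, hij⟩ :
      ∃ i j, Sum.inl i ∈ W ∧ Sum.inr j ∈ W ∧ G.Adj (Sum.inl i) (Sum.inr j) := by
    obtain ⟨⟨a | a, ha⟩, ⟨b | b, hb⟩, hab⟩ := SimpleGraph.ne_bot_iff_exists_adj.mp hW
    · exact absurd hab (hX a b)
    · exact ⟨a, b, ha, hb, hab⟩
    · exact ⟨b, a, hb, ha, hab.symm⟩
    · exact absurd hab (hY a b)
  obtain ⟨i₀, hi₀, hi₀_le⟩ :=
    Set.exists_min_image {i | Sum.inl i ∈ W} id (Set.toFinite _) ⟨i, hiW⟩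
  obtain ⟨j₀, hj₀, hj₀_le⟩ :=
    Set.exists_min_image {j | Sum.inr j ∈ W} id (Set.toFinite _) ⟨j, hjW⟩
  have hfold := ferrersFold_adj hX hY hferrers hi₀ hj₀ hi₀_le hj₀_le
    (hferrers i i₀ j j₀ hij (hi₀_le i hiW) (hj₀_le j hjW))
  refine ⟨⟨ferrersFold G W ⟨_, hi₀⟩ ⟨_, hj₀⟩, fun {u v} huv => ?_⟩,
    fun a b => ferrersFold_of_adj G W _ _⟩
  rcases u with i | j <;> rcases v with i' | j'
  · exact absurd huv (hX i i')
  · exact hfold huv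
  · exact (hfold huv.symm).symm
  · exact absurd huv (hY j j')

end Ferrers

theorem stmt15_general {n m : ℕ} (K : Type) [Field K]
    (G : SimpleGraph (Fin (n + 1) ⊕ Fin (m + 1)))
    (hX : ∀ i j : Fin (n + 1), ¬ G.Adj (Sum.inl i) (Sum.inl j))
    (hY : ∀ i j : Fin (m + 1), ¬ G.Adj (Sum.inr i) (Sum.inr j))
    (hferrers : ∀ (i p : Fin (n + 1)) (j q : Fin (m + 1)),
      G.Adj (Sum.inl i) (Sum.inr j) → p ≤ i → q ≤ j → G.Adj (Sum.inl p) (Sum.inr q))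
    (W : Set (Fin (n + 1) ⊕ Fin (m + 1))) :
    CutAlgebraRetract K (SimpleGraph.induce W G) G := by
  by_cases hW : G.induce W = ⊥
  · exact cutAlgebraRetract_of_eq_bot K (SimpleGraph.Embedding.induce W).toHom hW
  · obtain ⟨r, hr⟩ := exists_retraction_induce_of_ferrers hX hY hferrers hW
    exact cutAlgebraRetract_of_retraction K (SimpleGraph.Embedding.induce W).toHom r hr

theorem stmt15 {n m : ℕ} (K : Type) [Field K]
    (G : SimpleGraph (Fin (n + 1) ⊕ Fin (m + 1)))
    (hX : ∀ i j : Fin (n + 1), ¬ G.Adj (Sum.inl i) (Sum.inl j))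
    (hY : ∀ i j : Fin (m + 1), ¬ G.Adj (Sum.inr i) (Sum.inr j))
    (hc1 : G.Adj (Sum.inl 0) (Sum.inr (Fin.last m)))
    (hc2 : G.Adj (Sum.inl (Fin.last n)) (Sum.inr 0))
    (hferrers : ∀ (i p : Fin (n + 1)) (j q : Fin (m + 1)),
      G.Adj (Sum.inl i) (Sum.inr j) → p ≤ i → q ≤ j → G.Adj (Sum.inl p) (Sum.inr q))
    (W : Set (Fin (n + 1) ⊕ Fin (m + 1))) (hW : W.Nonempty) :
    CutAlgebraRetract K (SimpleGraph.induce W G) G :=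
  stmt15_general K G hX hY hferrers W

end CutPaper
end
end
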